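/- The normalized divergence NIB^{D,α}(X,Y) = α·(1 − I(X;Y)/min(H(X),H(Y))) + (1−α)·(1 − I(X;Y)/max(H(X),H(Y))) satisfies the relaxed triangle inequality NIB^{D,α}(X,Y) ≤ (1/min(α,1−α))·(NIB^{D,α}(X,Z) + NIB^{D,α}(Y,Z)) for 0 < α < 1 and positive entropies. -/

import Mathlib

open Real

/-- Shannon entropy of a discrete random variable `X` on a finite probability
space with weights `p`. -/
noncomputable def ent {Ω S : Type*} [Fintype Ω] [Fintype S] [DecidableEq S]
    (p : Ω → ℝ) (X : Ω → S) : ℝ :=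
  ∑ s : S, Real.negMulLog (∑ ω ∈ Finset.univ.filter (fun ω => X ω = s), p ω)

/-- Conditional entropy `H(X|Y) = H(X,Y) - H(Y)`. -/
noncomputable def condEnt {Ω S T : Type*} [Fintype Ω] [Fintype S] [Fintype T]
    [DecidableEq S] [DecidableEq T] (p : Ω → ℝ) (X : Ω → S) (Y : Ω → T) : ℝ :=
  ent p (fun ω => (X ω, Y ω)) - ent p Y

/-- Mutual information `I(X;Y) = H(X) + H(Y) - H(X,Y)`. -/
noncomputable def mutualInfo {Ω S T : Type*} [Fintype Ω] [Fintype S] [Fintype T]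
    [DecidableEq S] [DecidableEq T] (p : Ω → ℝ) (X : Ω → S) (Y : Ω → T) : ℝ :=
  ent p X + ent p Y - ent p (fun ω => (X ω, Y ω))

/-- The normalized divergence `NIB^{D,α}`. -/
noncomputable def NIBD {Ω S T : Type*} [Fintype Ω] [Fintype S] [Fintype T]
    [DecidableEq S] [DecidableEq T] (α : ℝ) (p : Ω → ℝ) (X : Ω → S) (Y : Ω → T) : ℝ :=
  α * (1 - mutualInfo p X Y / min (ent p X) (ent p Y)) +
    (1 - α) * (1 - mutualInfo p X Y / max (ent p X) (ent p Y))

/-!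
With `d_max = 1 - I(X;Y) / max (H X) (H Y)` and `d_min` likewise with `min`, `NIB^{D,α}` is the
convex combination `α d_min + (1 - α) d_max` of `0 ≤ d_min ≤ d_max`, hence lies between
`min(α, 1 - α) d_max` and `d_max`; so it suffices that `d_max` satisfies the triangle inequality.
As `min + max = H X + H Y`, `d_max(X,Y) = (H(X,Y) - min (H X) (H Y)) / max (H X) (H Y)`. With
`K = max (H X) (H Y) (H Z)`, pass to the denominator `K` on both sides (on the left by adding
`K - max` to the numerator, which can only increase the fraction since `H(X,Y) ≤ H X + H Y`);
what remains is the submodularity `H(X,Y) + H(Z) ≤ H(X,Z) + H(Y,Z)`. Submodularity,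
subadditivity and monotonicity of entropy all come from `log x ≤ x - 1`.
-/

open Finset

lemma negMulLog_sum_le {ι : Type*} (s : Finset ι) (g : ι → ℝ) (hg : ∀ i ∈ s, 0 ≤ g i) :
    negMulLog (∑ i ∈ s, g i) ≤ ∑ i ∈ s, negMulLog (g i) := by
  rw [negMulLog, neg_mul, sum_mul, ← sum_neg_distrib]
  refine sum_le_sum fun i hi => ?_
  rcases (hg i hi).eq_or_lt with h | h
  · simp [← h]
  · rw [negMulLog, neg_mul, neg_le_neg_iff]
    exact mul_le_mul_of_nonneg_left (log_le_log h (single_le_sum hg hi)) h.le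

lemma negMulLog_le_sub_sub_mul_log {a q : ℝ} (ha : 0 ≤ a) (hq : 0 < q) :
    negMulLog a ≤ q - a - a * log q := by
  rcases ha.eq_or_lt with h | h
  · simp [← h, hq.le]
  · have := mul_le_mul_of_nonneg_left (log_le_sub_one_of_pos (div_pos hq h)) h.le
    rw [log_div hq.ne' h.ne', mul_sub, mul_sub, mul_div_cancel₀ _ h.ne'] at this
    rw [negMulLog]
    linarith

lemma sum_sum_negMulLog_add_negMulLog_le {S T : Type*} [Fintype S] [Fintype T]
    (F : S → T → ℝ) (hF : ∀ s t, 0 ≤ F s t) :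
    ∑ s, ∑ t, negMulLog (F s t) + negMulLog (∑ s, ∑ t, F s t)
      ≤ ∑ s, negMulLog (∑ t, F s t) + ∑ t, negMulLog (∑ s, F s t) := by
  set b : S → ℝ := fun s => ∑ t, F s t
  set c : T → ℝ := fun t => ∑ s, F s t
  set d : ℝ := ∑ s, ∑ t, F s t
  have hFb : ∀ s t, F s t ≤ b s := fun s t => single_le_sum (fun t _ => hF s t) (mem_univ t)
  have hFc : ∀ s t, F s t ≤ c t := fun s t => single_le_sum (fun s _ => hF s t) (mem_univ s)
  rcases (sum_nonneg fun s _ => sum_nonneg fun t _ => hF s t : 0 ≤ d).eq_or_lt with hd | hd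
  · have hF0 : ∀ s t, F s t = 0 := fun s t =>
      (sum_eq_zero_iff_of_nonneg (fun t _ => hF s t)).1
        ((sum_eq_zero_iff_of_nonneg fun s _ => sum_nonneg fun t _ => hF s t).1 hd.symm s
          (mem_univ s)) t (mem_univ t)
    have hd0 : d = 0 := hd.symm
    simp [hF0, hd0]
  -- Gibbs' inequality against the product of the marginals, `q = b s * c t / d`.
  have hterm : ∀ s t, negMulLog (F s t)
      ≤ b s * c t / d - F s t - F s t * log (b s) - F s t * log (c t) + F s t * log d := by
    intro s t
    rcases (hF s t).eq_or_lt with h | h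
    · rw [← h]
      simpa using div_nonneg (mul_nonneg (h.le.trans (hFb s t)) (h.le.trans (hFc s t))) hd.le
    have hb := h.trans_le (hFb s t)
    have hc := h.trans_le (hFc s t)
    have := negMulLog_le_sub_sub_mul_log (hF s t) (by positivity : 0 < b s * c t / d)
    rw [log_div (by positivity) hd.ne', log_mul hb.ne' hc.ne'] at this
    linarith
  have hbc : ∑ s, ∑ t, b s * c t / d = d := by
    simp_rw [← sum_div, ← sum_mul_sum]
    rw [show ∑ t, c t = d from sum_comm, mul_div_cancel_right₀ _ hd.ne']
  have hlogb : ∑ s, ∑ t, F s t * log (b s) = ∑ s, b s * log (b s) := by simp [b, sum_mul]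
  have hlogc : ∑ s, ∑ t, F s t * log (c t) = ∑ t, c t * log (c t) := by
    rw [sum_comm]; simp [c, sum_mul]
  have hlogd : ∑ s, ∑ t, F s t * log d = d * log d := by simp [d, sum_mul]
  calc ∑ s, ∑ t, negMulLog (F s t) + negMulLog d
      ≤ ∑ s, ∑ t, (b s * c t / d - F s t - F s t * log (b s) - F s t * log (c t)
          + F s t * log d) + negMulLog d := by gcongr with s _ t _; exact hterm s t
    _ = ∑ s, negMulLog (b s) + ∑ t, negMulLog (c t) := by
      simp only [sum_add_distrib, sum_sub_distrib, hbc, hlogb, hlogc, hlogd, negMulLog,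
        neg_mul, sum_neg_distrib]
      ring

section Entropy

variable {Ω S T U : Type*} [Fintype Ω] [DecidableEq S] [DecidableEq T] [DecidableEq U]

noncomputable def mass (p : Ω → ℝ) (X : Ω → S) (s : S) : ℝ :=
  ∑ ω ∈ univ.filter (fun ω => X ω = s), p ω

lemma mass_nonneg {p : Ω → ℝ} (hp0 : ∀ ω, 0 ≤ p ω) (X : Ω → S) (s : S) :
    0 ≤ mass p X s :=
  sum_nonneg fun ω _ => hp0 ω

lemma mass_congr (p : Ω → ℝ) {X : Ω → S} {Y : Ω → T} {s : S} {t : T}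
    (h : ∀ ω, X ω = s ↔ Y ω = t) : mass p X s = mass p Y t := by
  simp only [mass, h]

lemma mass_eq_sum_mass_pair [Fintype T] (p : Ω → ℝ) (X : Ω → S) (Y : Ω → T) (s : S) :
    mass p X s = ∑ t, mass p (fun ω => (X ω, Y ω)) (s, t) := by
  rw [mass, ← sum_fiberwise (univ.filter fun ω => X ω = s) Y p]
  refine sum_congr rfl fun t _ => ?_
  rw [filter_filter, mass]
  simp only [Prod.ext_iff]

lemma mass_eq_sum_mass_pair_right [Fintype S] (p : Ω → ℝ) (X : Ω → S) (Y : Ω → T) (t : T) :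
    mass p Y t = ∑ s, mass p (fun ω => (X ω, Y ω)) (s, t) := by
  rw [mass_eq_sum_mass_pair p Y X t]
  exact sum_congr rfl fun s _ => mass_congr p fun ω => by simp only [Prod.ext_iff, and_comm]

variable [Fintype S] [Fintype T] [Fintype U]

lemma sum_mass (p : Ω → ℝ) (X : Ω → S) : ∑ s, mass p X s = ∑ ω, p ω :=
  sum_fiberwise _ _ _

lemma ent_eq_sum_negMulLog_mass (p : Ω → ℝ) (X : Ω → S) :
    ent p X = ∑ s, negMulLog (mass p X s) := rfl

lemma ent_pair (p : Ω → ℝ) (X : Ω → S) (Y : Ω → T) :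
    ent p (fun ω => (X ω, Y ω))
      = ∑ s, ∑ t, negMulLog (mass p (fun ω => (X ω, Y ω)) (s, t)) :=
  Fintype.sum_prod_type _

lemma ent_le_ent_pair_left {p : Ω → ℝ} (hp0 : ∀ ω, 0 ≤ p ω) (X : Ω → S) (Y : Ω → T) :
    ent p X ≤ ent p (fun ω => (X ω, Y ω)) := by
  rw [ent_eq_sum_negMulLog_mass, ent_pair]
  refine sum_le_sum fun s _ => ?_
  rw [mass_eq_sum_mass_pair p X Y s]
  exact negMulLog_sum_le _ _ fun t _ => mass_nonneg hp0 _ _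

lemma ent_le_ent_pair_right {p : Ω → ℝ} (hp0 : ∀ ω, 0 ≤ p ω) (X : Ω → S) (Y : Ω → T) :
    ent p Y ≤ ent p (fun ω => (X ω, Y ω)) := by
  rw [ent_eq_sum_negMulLog_mass, ent_pair, sum_comm]
  refine sum_le_sum fun t _ => ?_
  rw [mass_eq_sum_mass_pair_right p X Y t]
  exact negMulLog_sum_le _ _ fun s _ => mass_nonneg hp0 _ _

lemma ent_pair_le_add {p : Ω → ℝ} (hp0 : ∀ ω, 0 ≤ p ω) (hp1 : ∑ ω, p ω = 1)
    (X : Ω → S) (Y : Ω → T) :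
    ent p (fun ω => (X ω, Y ω)) ≤ ent p X + ent p Y := by
  have h := sum_sum_negMulLog_add_negMulLog_le (fun s t => mass p (fun ω => (X ω, Y ω)) (s, t))
    fun s t => mass_nonneg hp0 _ _
  simp only [← mass_eq_sum_mass_pair, ← mass_eq_sum_mass_pair_right, sum_mass, hp1,
    negMulLog_one, add_zero] at h
  rwa [ent_pair]

lemma ent_pair_add_le {p : Ω → ℝ} (hp0 : ∀ ω, 0 ≤ p ω) (X : Ω → S) (Y : Ω → T) (Z : Ω → U) :
    ent p (fun ω => (X ω, Y ω)) + ent p Z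
      ≤ ent p (fun ω => (X ω, Z ω)) + ent p (fun ω => (Y ω, Z ω)) := by
  set W : Ω → (S × T) × U := fun ω => ((X ω, Y ω), Z ω)
  set F : U → S → T → ℝ := fun u s t => mass p W ((s, t), u)
  have hXZ : ∀ s u, mass p (fun ω => (X ω, Z ω)) (s, u) = ∑ t, F u s t := fun s u => by
    rw [mass_eq_sum_mass_pair p _ Y]
    exact sum_congr rfl fun t _ => mass_congr p fun ω => by
      simp only [W, Prod.ext_iff]; tauto
  have hYZ : ∀ t u, mass p (fun ω => (Y ω, Z ω)) (t, u) = ∑ s, F u s t := fun t u => by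
    rw [mass_eq_sum_mass_pair p _ X]
    exact sum_congr rfl fun s _ => mass_congr p fun ω => by
      simp only [W, Prod.ext_iff]; tauto
  have hZ : ∀ u, mass p Z u = ∑ s, ∑ t, F u s t := fun u => by
    rw [mass_eq_sum_mass_pair_right p (fun ω => (X ω, Y ω)) Z, Fintype.sum_prod_type]
  have hXYZ : ent p W = ∑ u, ∑ s, ∑ t, negMulLog (F u s t) := by
    rw [ent_pair, Fintype.sum_prod_type]
    exact (sum_congr rfl fun s _ => sum_comm).trans sum_comm
  have hcore := sum_le_sum fun u (_ : u ∈ (univ : Finset U)) =>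
    sum_sum_negMulLog_add_negMulLog_le (F u) fun s t => mass_nonneg hp0 _ _
  rw [ent_pair p X Z, ent_pair p Y Z, ent_eq_sum_negMulLog_mass p Z, sum_comm (γ := S),
    sum_comm (γ := T)]
  simp only [hXZ, hYZ, hZ]
  rw [sum_add_distrib, sum_add_distrib, ← hXYZ] at hcore
  linarith [ent_le_ent_pair_left hp0 (fun ω => (X ω, Y ω)) Z]

end Entropy

lemma sub_min_div_max_le_add {a b c ab ac bc : ℝ} (ha : 0 < a) (hb : 0 < b)
    (hab : ab ≤ a + b) (hac : min a c ≤ ac) (hbc : min b c ≤ bc) (hsub : ab + c ≤ ac + bc) :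
    (ab - min a b) / max a b ≤ (ac - min a c) / max a c + (bc - min b c) / max b c := by
  set K := max (max a b) c
  have hM : 0 < max a b := lt_max_of_lt_left ha
  have hMK : max a b ≤ K := le_max_left _ _
  have hK : K + min a c + min b c ≤ a + b + c := by
    simp only [K, max_def, min_def]; split_ifs <;> linarith
  have hminmax := min_add_max a b
  calc (ab - min a b) / max a b
      ≤ (ab - min a b + (K - max a b)) / K := by
        rw [div_le_div_iff₀ hM (hM.trans_le hMK)]
        linarith [mul_nonneg (sub_nonneg.2 hMK) (by linarith : 0 ≤ max a b - (ab - min a b))]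
    _ ≤ ((ac - min a c) + (bc - min b c)) / K :=
      div_le_div_of_nonneg_right (by linarith) (hM.trans_le hMK).le
    _ ≤ (ac - min a c) / max a c + (bc - min b c) / max b c := by
      rw [add_div]
      exact add_le_add
        (div_le_div_of_nonneg_left (sub_nonneg.2 hac) (lt_max_of_lt_left ha)
          (max_le_max_right c (le_max_left a b)))
        (div_le_div_of_nonneg_left (sub_nonneg.2 hbc) (lt_max_of_lt_left hb)
          (max_le_max_right c (le_max_right a b)))

section NormalizedDistance

variable {Ω S T U : Type*} [Fintype Ω] [Fintype S] [Fintype T] [Fintype U]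
  [DecidableEq S] [DecidableEq T] [DecidableEq U]

noncomputable def dMax (p : Ω → ℝ) (X : Ω → S) (Y : Ω → T) : ℝ :=
  1 - mutualInfo p X Y / max (ent p X) (ent p Y)

noncomputable def dMin (p : Ω → ℝ) (X : Ω → S) (Y : Ω → T) : ℝ :=
  1 - mutualInfo p X Y / min (ent p X) (ent p Y)

lemma NIBD_eq (α : ℝ) (p : Ω → ℝ) (X : Ω → S) (Y : Ω → T) :
    NIBD α p X Y = α * dMin p X Y + (1 - α) * dMax p X Y := rfl

lemma mutualInfo_nonneg {p : Ω → ℝ} (hp0 : ∀ ω, 0 ≤ p ω) (hp1 : ∑ ω, p ω = 1)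
    (X : Ω → S) (Y : Ω → T) : 0 ≤ mutualInfo p X Y := by
  rw [mutualInfo]
  linarith [ent_pair_le_add hp0 hp1 X Y]

lemma mutualInfo_le_min {p : Ω → ℝ} (hp0 : ∀ ω, 0 ≤ p ω) (X : Ω → S) (Y : Ω → T) :
    mutualInfo p X Y ≤ min (ent p X) (ent p Y) := by
  rw [mutualInfo]
  exact le_min (by linarith [ent_le_ent_pair_right hp0 X Y])
    (by linarith [ent_le_ent_pair_left hp0 X Y])

lemma dMax_eq {p : Ω → ℝ} {X : Ω → S} {Y : Ω → T} (h : 0 < max (ent p X) (ent p Y)) :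
    dMax p X Y
      = (ent p (fun ω => (X ω, Y ω)) - min (ent p X) (ent p Y)) / max (ent p X) (ent p Y) := by
  rw [dMax, one_sub_div h.ne', mutualInfo]
  congr 1
  linarith [min_add_max (ent p X) (ent p Y)]

lemma dMax_triangle {p : Ω → ℝ} (hp0 : ∀ ω, 0 ≤ p ω) (hp1 : ∑ ω, p ω = 1)
    {X : Ω → S} {Y : Ω → T} (Z : Ω → U) (hX : 0 < ent p X) (hY : 0 < ent p Y) :
    dMax p X Y ≤ dMax p X Z + dMax p Y Z := by
  rw [dMax_eq (lt_max_of_lt_left hX), dMax_eq (lt_max_of_lt_left hX),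
    dMax_eq (lt_max_of_lt_left hY)]
  exact sub_min_div_max_le_add hX hY (ent_pair_le_add hp0 hp1 X Y)
    ((min_le_left _ _).trans (ent_le_ent_pair_left hp0 X Z))
    ((min_le_left _ _).trans (ent_le_ent_pair_left hp0 Y Z)) (ent_pair_add_le hp0 X Y Z)

lemma dMin_le_dMax {p : Ω → ℝ} {X : Ω → S} {Y : Ω → T} (hI : 0 ≤ mutualInfo p X Y)
    (h : 0 < min (ent p X) (ent p Y)) : dMin p X Y ≤ dMax p X Y :=
  sub_le_sub_left (div_le_div_of_nonneg_left hI h min_le_max) 1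

lemma dMin_nonneg {p : Ω → ℝ} {X : Ω → S} {Y : Ω → T} (hI0 : 0 ≤ mutualInfo p X Y)
    (hI : mutualInfo p X Y ≤ min (ent p X) (ent p Y)) : 0 ≤ dMin p X Y :=
  sub_nonneg.2 (div_le_one_of_le₀ hI (hI0.trans hI))

lemma dMax_nonneg {p : Ω → ℝ} {X : Ω → S} {Y : Ω → T} (hI0 : 0 ≤ mutualInfo p X Y)
    (hI : mutualInfo p X Y ≤ min (ent p X) (ent p Y)) : 0 ≤ dMax p X Y :=
  sub_nonneg.2 (div_le_one_of_le₀ (hI.trans min_le_max) (hI0.trans (hI.trans min_le_max)))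

lemma NIBD_le_dMax {α : ℝ} (hα : 0 ≤ α) {p : Ω → ℝ} {X : Ω → S} {Y : Ω → T}
    (hI : 0 ≤ mutualInfo p X Y) (h : 0 < min (ent p X) (ent p Y)) :
    NIBD α p X Y ≤ dMax p X Y := by
  rw [NIBD_eq]
  nlinarith [dMin_le_dMax hI h]

lemma min_mul_dMax_le_NIBD {α : ℝ} (hα : 0 ≤ α) {p : Ω → ℝ} {X : Ω → S} {Y : Ω → T}
    (hI0 : 0 ≤ mutualInfo p X Y) (hI : mutualInfo p X Y ≤ min (ent p X) (ent p Y)) :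
    min α (1 - α) * dMax p X Y ≤ NIBD α p X Y := by
  rw [NIBD_eq]
  nlinarith [mul_nonneg hα (dMin_nonneg hI0 hI), dMax_nonneg hI0 hI, min_le_right α (1 - α)]

end NormalizedDistance

theorem NIBD_relaxed_triangle_general {Ω S T U : Type*} [Fintype Ω] [Fintype S] [Fintype T]
    [Fintype U] [DecidableEq S] [DecidableEq T] [DecidableEq U]
    (p : Ω → ℝ) (hp0 : ∀ ω, 0 ≤ p ω) (hp1 : ∑ ω, p ω = 1)
    (α : ℝ) (hα0 : 0 < α) (hα1 : α < 1)
    (X : Ω → S) (Y : Ω → T) (Z : Ω → U)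
    (hX : 0 < ent p X) (hY : 0 < ent p Y) :
    NIBD α p X Y ≤ (1 / min α (1 - α)) * (NIBD α p X Z + NIBD α p Y Z) := by
  have hm : 0 < min α (1 - α) := lt_min hα0 (sub_pos.2 hα1)
  calc NIBD α p X Y
      ≤ dMax p X Y := NIBD_le_dMax hα0.le (mutualInfo_nonneg hp0 hp1 X Y) (lt_min hX hY)
    _ ≤ dMax p X Z + dMax p Y Z := dMax_triangle hp0 hp1 Z hX hY
    _ ≤ (1 / min α (1 - α)) * (NIBD α p X Z + NIBD α p Y Z) := by
      rw [one_div_mul_eq_div, le_div_iff₀ hm, mul_comm, mul_add]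
      exact add_le_add
        (min_mul_dMax_le_NIBD hα0.le (mutualInfo_nonneg hp0 hp1 X Z)
          (mutualInfo_le_min hp0 X Z))
        (min_mul_dMax_le_NIBD hα0.le (mutualInfo_nonneg hp0 hp1 Y Z)
          (mutualInfo_le_min hp0 Y Z))

theorem NIBD_relaxed_triangle {Ω S T U : Type*} [Fintype Ω] [Fintype S] [Fintype T]
    [Fintype U] [DecidableEq S] [DecidableEq T] [DecidableEq U]
    (p : Ω → ℝ) (hp0 : ∀ ω, 0 ≤ p ω) (hp1 : ∑ ω, p ω = 1)
    (α : ℝ) (hα0 : 0 < α) (hα1 : α < 1)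
    (X : Ω → S) (Y : Ω → T) (Z : Ω → U)
    (hX : 0 < ent p X) (hY : 0 < ent p Y) (hZ : 0 < ent p Z) :
    NIBD α p X Y ≤ (1 / min α (1 - α)) * (NIBD α p X Z + NIBD α p Y Z) :=
  NIBD_relaxed_triangle_general p hp0 hp1 α hα0 hα1 X Y Z hX hY
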